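/- The blow-up of C_5 by K_m contains no induced H2, where H2 is the 5-cycle a-b-c-d-e-a with added chords ac and bd. -/

import Mathlib

open SimpleGraph

/-- The blow-up `C₅[K_m]`: each vertex of the 5-cycle replaced by a clique of size `m`. -/
def blowupC5 (m : ℕ) : SimpleGraph (Fin 5 × Fin m) where
  Adj x y := (x.1 = y.1 ∧ x.2 ≠ y.2) ∨ (cycleGraph 5).Adj x.1 y.1
  symm := by
    constructor
    intro x y h
    rcases h with ⟨h1, h2⟩ | h
    · exact Or.inl ⟨h1.symm, h2.symm⟩
    · exact Or.inr h.symm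
  loopless := by
    constructor
    intro x h
    rcases h with ⟨_, h2⟩ | h
    · exact h2 rfl
    · exact (cycleGraph 5).loopless.irrefl _ h

/-- `H2`: the 5-cycle a-b-c-d-e-a together with chords ac and bd. -/
def H2 : SimpleGraph (Fin 5) :=
  fromEdgeSet {s(0, 1), s(1, 2), s(2, 3), s(3, 4), s(4, 0), s(0, 2), s(1, 3)}


/-!
The vertices `0, 1, 3, 4` of `H2` induce a 4-cycle, so it suffices that `C₅[K_m]` has no induced
`C₄`. In an induced `C₄` of `C₅[K_m]`, two opposite vertices lie in distinct non-adjacent classes,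
and in `C₅` such classes have exactly one common closed neighbour. Both remaining vertices of the
`C₄` must lie in that class, which is a clique, so they are adjacent: a contradiction.
-/

lemma blowupC5_adj_fst {m : ℕ} {x y : Fin 5 × Fin m} (h : (blowupC5 m).Adj x y) :
    x.1 = y.1 ∨ (cycleGraph 5).Adj x.1 y.1 :=
  h.imp_left And.left

lemma blowupC5_not_adj_fst {m : ℕ} {x y : Fin 5 × Fin m} (hxy : x ≠ y)
    (h : ¬ (blowupC5 m).Adj x y) : x.1 ≠ y.1 ∧ ¬ (cycleGraph 5).Adj x.1 y.1 :=
  ⟨fun h1 => h (Or.inl ⟨h1, fun h2 => hxy (Prod.ext h1 h2)⟩), fun hc => h (Or.inr hc)⟩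

lemma cycleGraph_five_eq_of_common_closed_neighbor {a b x y : Fin 5} (hab : a ≠ b)
    (hab' : ¬ (cycleGraph 5).Adj a b)
    (hxa : x = a ∨ (cycleGraph 5).Adj x a) (hxb : x = b ∨ (cycleGraph 5).Adj x b)
    (hya : y = a ∨ (cycleGraph 5).Adj y a) (hyb : y = b ∨ (cycleGraph 5).Adj y b) :
    x = y := by
  revert a b x y
  decide

theorem not_cycleGraph_four_isIndContained_blowupC5 (m : ℕ) : ¬ cycleGraph 4 ⊴ blowupC5 m := by
  rintro ⟨f⟩
  have adj (i j : Fin 4) (h : (cycleGraph 4).Adj i j) := blowupC5_adj_fst (f.map_rel_iff.mpr h)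
  have nonadj (i j : Fin 4) (hij : i ≠ j) (h : ¬ (cycleGraph 4).Adj i j) :=
    blowupC5_not_adj_fst (f.injective.ne hij) (mt f.map_rel_iff.mp h)
  obtain ⟨h02, h02'⟩ := nonadj 0 2 (by decide) (by decide)
  obtain ⟨h13, -⟩ := nonadj 1 3 (by decide) (by decide)
  exact h13 <| cycleGraph_five_eq_of_common_closed_neighbor h02 h02'
    (adj 1 0 (by decide)) (adj 1 2 (by decide)) (adj 3 0 (by decide)) (adj 3 2 (by decide))

lemma H2_adj_iff {a b : Fin 5} : H2.Adj a b ↔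
    s(a, b) ∈ ({s(0, 1), s(1, 2), s(2, 3), s(3, 4), s(4, 0), s(0, 2), s(1, 3)} :
      Finset (Sym2 (Fin 5))) ∧ a ≠ b := by
  simp only [H2, fromEdgeSet_adj, Set.mem_insert_iff, Set.mem_singleton_iff, Finset.mem_insert,
    Finset.mem_singleton]

def cycleGraphFourEmbeddingH2 : cycleGraph 4 ↪g H2 where
  toFun := ![0, 1, 3, 4]
  inj' := by decide
  map_rel_iff' {a b} := by
    rw [H2_adj_iff]
    revert a b
    decide

theorem stmt_15 (m : ℕ) : ¬ Nonempty (H2 ↪g blowupC5 m) := fun h =>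
  not_cycleGraph_four_isIndContained_blowupC5 m (cycleGraphFourEmbeddingH2.isIndContained.trans h)
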